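/- Let n ≥ 3 and let a ∈ A_n be doubly pure. Then (ã, x, a) = 0 for every x ∈ H_a, and (ã, x, a) = −2·a·(a·x̃) for every x ∈ H_a^⊥. -/

import Mathlib

noncomputable section

open scoped Quaternion

/-- The Cayley–Dickson algebra `A n = ℝ^(2^n)` as a type. -/
def CD : ℕ → Type
  | 0 => ℝ
  | n + 1 => CD n × CD n

namespace CD

instance instAddCommGroup : (n : ℕ) → AddCommGroup (CD n)
  | 0 => inferInstanceAs (AddCommGroup ℝ)
  | n + 1 =>
    letI := instAddCommGroup n
    inferInstanceAs (AddCommGroup (CD n × CD n))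

instance instModule : (n : ℕ) → Module ℝ (CD n)
  | 0 => inferInstanceAs (Module ℝ ℝ)
  | n + 1 =>
    letI := instModule n
    inferInstanceAs (Module ℝ (CD n × CD n))

/-- Conjugation in the Cayley–Dickson algebra. -/
def conj : {n : ℕ} → CD n → CD n
  | 0, x => x
  | _ + 1, x => (conj x.1, -x.2)

/-- Cayley–Dickson multiplication. -/
def mul : {n : ℕ} → CD n → CD n → CD n
  | 0, x, y => Mul.mul (α := ℝ) x y
  | _ + 1, x, y =>
    (mul x.1 y.1 - mul (conj y.2) x.2, mul y.2 x.1 + mul x.2 (conj y.1))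

instance instMul (n : ℕ) : Mul (CD n) := ⟨mul⟩

/-- The multiplicative unit `e₀`. -/
def one : {n : ℕ} → CD n
  | 0 => (1 : ℝ)
  | _ + 1 => (one, 0)

instance instOne (n : ℕ) : One (CD n) := ⟨one⟩

/-- The Euclidean inner product on `A n = ℝ^(2^n)`. -/
def inner : {n : ℕ} → CD n → CD n → ℝ
  | 0, x, y => (x * y : ℝ)
  | _ + 1, x, y => inner x.1 y.1 + inner x.2 y.2

/-- The Euclidean norm on `A n = ℝ^(2^n)`. -/
def norm {n : ℕ} (x : CD n) : ℝ := Real.sqrt (inner x x)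

/-- `ã = (-a₂, a₁)`. -/
def tilde {n : ℕ} (a : CD (n + 1)) : CD (n + 1) := (-a.2, a.1)

/-- `ẽ₀ = (0, e₀)`. -/
def etilde (n : ℕ) : CD (n + 1) := ((0 : CD n), (1 : CD n))

/-- An element is pure if its conjugate is its negative. -/
def IsPure {n : ℕ} (a : CD n) : Prop := conj a = -a

/-- An element of `A (n+1)` is doubly pure if both of its coordinates are pure. -/
def IsDoublyPure {n : ℕ} (a : CD (n + 1)) : Prop := IsPure a.1 ∧ IsPure a.2

/-- The associator `(a,b,c) = (ab)c - a(bc)`. -/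
def assoc {n : ℕ} (a b c : CD n) : CD n := a * b * c - a * (b * c)

/-- An element is alternative if `(a,a,x) = 0` for all `x`. -/
def IsAlternative {n : ℕ} (a : CD n) : Prop := ∀ x : CD n, assoc a a x = 0

/-- An element is strongly alternative if `(a,a,x) = 0` and `(a,x,x) = 0` for all `x`. -/
def IsStronglyAlternative {n : ℕ} (a : CD n) : Prop :=
  (∀ x : CD n, assoc a a x = 0) ∧ (∀ x : CD n, assoc a x x = 0)

/-- The pure (imaginary) part of an element. -/
def im {n : ℕ} (a : CD n) : CD n := (2⁻¹ : ℝ) • (a - conj a)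

/-- `H a`, the span of `{e₀, ã, a, ẽ₀}`. -/
def H {n : ℕ} (a : CD (n + 1)) : Submodule ℝ (CD (n + 1)) :=
  Submodule.span ℝ {(1 : CD (n + 1)), tilde a, a, etilde n}

/-- The orthogonal complement of `H a`. -/
def Hperp {n : ℕ} (a : CD (n + 1)) : Set (CD (n + 1)) :=
  {x | ∀ y ∈ H a, inner y x = 0}

end CD

/-!
Write `a = (p, q)` and `x = (u, v)` with `p, q, u, v` pure in `A n`. Expanding in components and
using the anticommutation rule `w p = -p w + 2⟨w, 1⟩ p - 2⟨p, w⟩` to move `p` and `q` to the left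
gives, for every doubly pure `x`,
`(ã, x, a) = -2 a (a x̃) + 2⟨ã, x⟩ a - 2⟨a, x⟩ ã`.
An `x ⊥ H a` is orthogonal to `e₀` and `ẽ₀`, hence doubly pure, and to `a` and `ã`, which gives
the second claim. The first follows by linearity in `x` from the generators of `H a`: for `x = a`
and `x = ã` from the formula together with `a ã = -|a|² ẽ₀` and `a a = -|a|²`, for `x = ẽ₀` from
`ã ẽ₀ = -a` and `ẽ₀ a = -ã`.
-/

namespace CD

variable {n : ℕ}

@[simp] lemma fst_add (x y : CD (n + 1)) : (x + y).1 = x.1 + y.1 := rfl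
@[simp] lemma snd_add (x y : CD (n + 1)) : (x + y).2 = x.2 + y.2 := rfl
@[simp] lemma fst_neg (x : CD (n + 1)) : (-x).1 = -x.1 := rfl
@[simp] lemma snd_neg (x : CD (n + 1)) : (-x).2 = -x.2 := rfl
@[simp] lemma fst_sub (x y : CD (n + 1)) : (x - y).1 = x.1 - y.1 := rfl
@[simp] lemma snd_sub (x y : CD (n + 1)) : (x - y).2 = x.2 - y.2 := rfl
@[simp] lemma fst_smul (r : ℝ) (x : CD (n + 1)) : (r • x).1 = r • x.1 := rfl
@[simp] lemma snd_smul (r : ℝ) (x : CD (n + 1)) : (r • x).2 = r • x.2 := rfl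
@[simp] lemma fst_one : (1 : CD (n + 1)).1 = 1 := rfl
@[simp] lemma snd_one : (1 : CD (n + 1)).2 = 0 := rfl

lemma ext {x y : CD (n + 1)} (h₁ : x.1 = y.1) (h₂ : x.2 = y.2) : x = y := Prod.ext h₁ h₂

@[simp] lemma fst_mul (x y : CD (n + 1)) : (x * y).1 = x.1 * y.1 - conj y.2 * x.2 := rfl
@[simp] lemma snd_mul (x y : CD (n + 1)) : (x * y).2 = y.2 * x.1 + x.2 * conj y.1 := rfl
@[simp] lemma fst_conj (x : CD (n + 1)) : (conj x).1 = conj x.1 := rfl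
@[simp] lemma snd_conj (x : CD (n + 1)) : (conj x).2 = -x.2 := rfl

lemma inner_succ (x y : CD (n + 1)) : inner x y = inner x.1 y.1 + inner x.2 y.2 := rfl

lemma conj_add : ∀ {n : ℕ} (x y : CD n), conj (x + y) = conj x + conj y
  | 0, _, _ => rfl
  | _ + 1, x, y => ext (conj_add x.1 y.1) (neg_add _ _)

lemma conj_smul : ∀ {n : ℕ} (r : ℝ) (x : CD n), conj (r • x) = r • conj x
  | 0, _, _ => rfl
  | _ + 1, r, x => ext (conj_smul r x.1) (smul_neg r x.2).symm

def conjₗ (n : ℕ) : CD n →ₗ[ℝ] CD n where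
  toFun := conj
  map_add' := conj_add
  map_smul' := conj_smul

lemma conj_neg (x : CD n) : conj (-x) = -conj x := map_neg (conjₗ n) x
lemma conj_sub (x y : CD n) : conj (x - y) = conj x - conj y := map_sub (conjₗ n) x y
lemma conj_zero : conj (0 : CD n) = 0 := map_zero (conjₗ n)

lemma conj_conj : ∀ {n : ℕ} (x : CD n), conj (conj x) = x
  | 0, _ => rfl
  | _ + 1, x => ext (conj_conj x.1) (neg_neg x.2)

lemma conj_one : ∀ {n : ℕ}, conj (1 : CD n) = 1
  | 0 => rfl
  | _ + 1 => ext conj_one neg_zero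

lemma mul_add_and_add_mul : ∀ n : ℕ,
    (∀ x y z : CD n, x * (y + z) = x * y + x * z) ∧ (∀ x y z : CD n, (x + y) * z = x * z + y * z)
  | 0 => ⟨fun x y z => mul_add (R := ℝ) x y z, fun x y z => add_mul (R := ℝ) x y z⟩
  | n + 1 => by
    obtain ⟨hl, hr⟩ := mul_add_and_add_mul n
    constructor <;> intro x y z <;> apply ext <;>
      simp only [fst_mul, snd_mul, fst_add, snd_add, conj_add, hl, hr] <;> abel

-- Scoped, so that outside `CD` the operations still elaborate through `instMul` and
-- `instAddCommGroup` rather than through these (defeq, but syntactically different) instances.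
scoped instance instNonUnitalNonAssocRing (n : ℕ) : NonUnitalNonAssocRing (CD n) where
  __ := instAddCommGroup n
  __ := instMul n
  left_distrib := (mul_add_and_add_mul n).1
  right_distrib := (mul_add_and_add_mul n).2
  zero_mul x := by simpa using (mul_add_and_add_mul n).2 0 0 x
  mul_zero x := by simpa using (mul_add_and_add_mul n).1 x 0 0

lemma smul_mul_and_mul_smul : ∀ n : ℕ, (∀ (r : ℝ) (x y : CD n), (r • x) * y = r • (x * y)) ∧
    (∀ (r : ℝ) (x y : CD n), x * (r • y) = r • (x * y))
  | 0 => ⟨fun r x y => mul_assoc (G := ℝ) r x y, fun r x y => mul_left_comm (G := ℝ) x r y⟩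
  | n + 1 => by
    obtain ⟨hl, hr⟩ := smul_mul_and_mul_smul n
    constructor <;> intro r x y <;> apply ext <;> simp [conj_smul, hl, hr, smul_sub, smul_add]

scoped instance instIsScalarTower (n : ℕ) : IsScalarTower ℝ (CD n) (CD n) :=
  ⟨(smul_mul_and_mul_smul n).1⟩

scoped instance instSMulCommClass (n : ℕ) : SMulCommClass ℝ (CD n) (CD n) :=
  ⟨fun r x y => ((smul_mul_and_mul_smul n).2 r x y).symm⟩

lemma one_mul_and_mul_one : ∀ n : ℕ, (∀ x : CD n, 1 * x = x) ∧ (∀ x : CD n, x * 1 = x)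
  | 0 => ⟨fun x => one_mul (M := ℝ) x, fun x => mul_one (M := ℝ) x⟩
  | n + 1 => by
    obtain ⟨hl, hr⟩ := one_mul_and_mul_one n
    constructor <;> intro x <;> apply ext <;> simp [conj_zero, conj_one, hl, hr]

scoped instance instMulOneClass (n : ℕ) : MulOneClass (CD n) where
  one_mul := (one_mul_and_mul_one n).1
  mul_one := (one_mul_and_mul_one n).2

lemma conj_mul : ∀ {n : ℕ} (x y : CD n), conj (x * y) = conj y * conj x
  | 0, x, y => mul_comm (G := ℝ) x y
  | _ + 1, x, y => by
    refine ext ?_ ?_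
    · simp [conj_sub, conj_neg, conj_mul x.1 y.1, conj_mul (conj y.2) x.2, conj_conj]
    · simp [conj_conj]

lemma inner_comm : ∀ {n : ℕ} (x y : CD n), inner x y = inner y x
  | 0, x, y => mul_comm (G := ℝ) x y
  | _ + 1, x, y => by rw [inner_succ, inner_succ, inner_comm x.1, inner_comm x.2]

lemma inner_add_left : ∀ {n : ℕ} (x y z : CD n), inner (x + y) z = inner x z + inner y z
  | 0, x, y, z => add_mul (R := ℝ) x y z
  | _ + 1, x, y, z => by
    simp only [inner_succ, fst_add, snd_add, inner_add_left]
    ring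

lemma inner_smul_left : ∀ {n : ℕ} (r : ℝ) (x y : CD n), inner (r • x) y = r * inner x y
  | 0, r, x, y => mul_assoc (G := ℝ) r x y
  | _ + 1, r, x, y => by
    simp only [inner_succ, fst_smul, snd_smul, inner_smul_left]
    ring

def innerₗ (n : ℕ) : LinearMap.BilinForm ℝ (CD n) :=
  LinearMap.mk₂ ℝ inner inner_add_left inner_smul_left
    (fun x y z => by rw [inner_comm, inner_add_left, inner_comm y, inner_comm z])
    (fun r x y => by rw [inner_comm, inner_smul_left, inner_comm y, smul_eq_mul])

lemma inner_add_right (x y z : CD n) : inner x (y + z) = inner x y + inner x z :=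
  (innerₗ n x).map_add y z
lemma inner_smul_right (r : ℝ) (x y : CD n) : inner x (r • y) = r * inner x y :=
  (innerₗ n x).map_smul r y
lemma inner_neg_left (x y : CD n) : inner (-x) y = -inner x y := LinearMap.map_neg₂ (innerₗ n) x y
lemma inner_neg_right (x y : CD n) : inner x (-y) = -inner x y := (innerₗ n x).map_neg y
lemma inner_sub_left (x y z : CD n) : inner (x - y) z = inner x z - inner y z :=
  LinearMap.map_sub₂ (innerₗ n) x y z
lemma inner_sub_right (x y z : CD n) : inner x (y - z) = inner x y - inner x z :=
  (innerₗ n x).map_sub y z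
lemma inner_zero_left (y : CD n) : inner 0 y = 0 := LinearMap.map_zero₂ (innerₗ n) y
lemma inner_zero_right (x : CD n) : inner x 0 = 0 := (innerₗ n x).map_zero

lemma inner_one_one : ∀ {n : ℕ}, inner (1 : CD n) 1 = 1
  | 0 => mul_one (M := ℝ) 1
  | _ + 1 => by rw [inner_succ, fst_one, snd_one, inner_one_one, inner_zero_left, add_zero]

lemma add_conj : ∀ {n : ℕ} (x : CD n), x + conj x = (2 * inner x 1) • (1 : CD n)
  | 0, x => by
    have h (t : ℝ) : t + t = (2 * (t * 1)) • (1 : ℝ) := by rw [smul_eq_mul]; ring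
    exact h x
  | _ + 1, x => by
    apply ext
    · simp [add_conj x.1, inner_succ, inner_zero_right]
    · simp [inner_succ]

lemma inner_mul_left_and_right : ∀ {n : ℕ} (x y z : CD n),
    inner (x * y) z = inner y (conj x * z) ∧ inner (x * y) z = inner x (z * conj y)
  | 0, x, y, z => by
    have h (a b c : ℝ) : a * b * c = b * (a * c) ∧ a * b * c = a * (c * b) := ⟨by ring, by ring⟩
    exact h x y z
  | n + 1, x, y, z => by
    have I₁ : ∀ a b c : CD n, inner (a * b) c = inner b (conj a * c) :=
      fun a b c => (inner_mul_left_and_right a b c).1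
    have I₂ : ∀ a b c : CD n, inner (a * b) c = inner a (c * conj b) :=
      fun a b c => (inner_mul_left_and_right a b c).2
    have e₂ : inner (conj y.2 * x.2) z.1 = inner x.2 (y.2 * z.1) := by rw [I₁, conj_conj]
    have e₄ : inner (x.2 * conj y.1) z.2 = inner x.2 (z.2 * y.1) := by rw [I₂, conj_conj]
    have e₅ : inner (conj z.2 * x.2) y.1 = inner x.2 (z.2 * y.1) := by rw [I₁, conj_conj]
    have e₆ : inner (x.2 * conj z.1) y.2 = inner x.2 (y.2 * z.1) := by rw [I₂, conj_conj]
    constructor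
    · simp only [inner_succ, fst_mul, snd_mul, fst_conj, snd_conj, inner_sub_left,
        inner_add_left, inner_add_right, inner_sub_right, neg_mul, mul_neg, inner_neg_right]
      linear_combination I₁ x.1 y.1 z.1 - e₂ + I₂ y.2 x.1 z.2 + e₄ - e₅ -
        inner_comm y.1 (conj z.2 * x.2) + e₆ + inner_comm y.2 (x.2 * conj z.1)
    · simp only [inner_succ, fst_mul, snd_mul, fst_conj, snd_conj, inner_sub_left,
        inner_add_left, inner_add_right, inner_sub_right, neg_mul, inner_neg_right, conj_neg,
        conj_conj]
      linear_combination I₂ x.1 y.1 z.1 - e₂ + I₁ y.2 x.1 z.2 + e₄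

lemma inner_mul_left (x y z : CD n) : inner (x * y) z = inner y (conj x * z) :=
  (inner_mul_left_and_right x y z).1

lemma inner_mul_right (x y z : CD n) : inner (x * y) z = inner x (z * conj y) :=
  (inner_mul_left_and_right x y z).2

lemma mul_conj_add_mul_conj (x y : CD n) :
    x * conj y + y * conj x = (2 * inner x y) • (1 : CD n) := by
  have h := add_conj (x * conj y)
  rwa [conj_mul, conj_conj, inner_mul_right, one_mul, conj_conj] at h

lemma conj_eq_smul_one_sub (x : CD n) : conj x = (2 * inner x 1) • (1 : CD n) - x :=
  eq_sub_of_add_eq' (add_conj x)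

lemma isPure_iff_inner_one_eq_zero {x : CD n} : IsPure x ↔ inner x 1 = 0 := by
  have h := congrArg (inner · 1) (add_conj x)
  simp only [inner_add_left, inner_smul_left, inner_one_one, mul_one] at h
  constructor
  · intro hx
    rw [hx, inner_neg_left] at h
    linarith
  · intro hx
    rw [IsPure, conj_eq_smul_one_sub, hx]
    module

namespace IsPure

variable {p s t : CD n}

lemma conj_eq (hp : IsPure p) : conj p = -p := hp

lemma inner_one (hp : IsPure p) : inner p 1 = 0 := isPure_iff_inner_one_eq_zero.1 hp

lemma neg (hp : IsPure p) : IsPure (-p) := by rw [IsPure, conj_neg, hp]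

lemma mul_self (hp : IsPure p) : p * p = -(inner p p • (1 : CD n)) := by
  have h := mul_conj_add_mul_conj p p
  rw [hp, mul_neg] at h
  linear_combination (norm := module) (-2⁻¹ : ℝ) • h

lemma mul_anticomm (hp : IsPure p) (w : CD n) :
    w * p = -(p * w) + (2 * inner w 1) • p - (2 * inner p w) • (1 : CD n) := by
  have h := mul_conj_add_mul_conj p w
  rw [hp, conj_eq_smul_one_sub, mul_sub, mul_neg, mul_smul_comm, mul_one] at h
  linear_combination (norm := module) -h

lemma mul_anticomm_of_isPure (hp : IsPure p) (hs : IsPure s) :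
    s * p = -(p * s) - (2 * inner p s) • (1 : CD n) := by
  rw [hp.mul_anticomm, hs.inner_one]
  module

lemma mul_mul_anticomm (hp : IsPure p) (ht : IsPure t) (w : CD n) :
    w * t * p = -(p * (w * t)) - (2 * inner w t) • p - (2 * inner p (w * t)) • (1 : CD n) := by
  rw [hp.mul_anticomm, inner_mul_right, one_mul, ht, inner_neg_right]
  module

lemma inner_mul_self_left (hp : IsPure p) (hs : IsPure s) : inner p (p * s) = 0 := by
  rw [inner_comm, inner_mul_left, hp, neg_mul, hp.mul_self, neg_neg, inner_smul_right,
    hs.inner_one, mul_zero]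

lemma inner_mul_add_inner_mul (hp : IsPure p) (hs : IsPure s) (ht : IsPure t) :
    inner p (s * t) + inner s (p * t) = 0 := by
  rw [inner_comm, inner_mul_left, hs, inner_comm s, inner_mul_left, hp, ← inner_add_right,
    neg_mul, neg_mul, ← neg_add, hp.mul_anticomm_of_isPure hs]
  simp [inner_smul_right, ht.inner_one]

end IsPure

@[simp] lemma fst_tilde (x : CD (n + 1)) : (tilde x).1 = -x.2 := rfl
@[simp] lemma snd_tilde (x : CD (n + 1)) : (tilde x).2 = x.1 := rfl
@[simp] lemma fst_etilde : (etilde n).1 = 0 := rfl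
@[simp] lemma snd_etilde : (etilde n).2 = 1 := rfl

lemma tilde_tilde (x : CD (n + 1)) : tilde (tilde x) = -x := ext rfl rfl

lemma inner_tilde_tilde (x : CD (n + 1)) : inner (tilde x) (tilde x) = inner x x := by
  rw [inner_succ, inner_succ, fst_tilde, snd_tilde, inner_neg_left, inner_neg_right, neg_neg,
    add_comm]

lemma inner_tilde_self (x : CD (n + 1)) : inner (tilde x) x = 0 := by
  rw [inner_succ, fst_tilde, snd_tilde, inner_neg_left, inner_comm, neg_add_cancel]

lemma inner_self_tilde (x : CD (n + 1)) : inner x (tilde x) = 0 := by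
  rw [inner_comm, inner_tilde_self]

lemma mul_etilde (x : CD (n + 1)) : x * etilde n = tilde x := by
  apply ext <;> simp [conj_zero, conj_one]

lemma isDoublyPure_iff {x : CD (n + 1)} :
    IsDoublyPure x ↔ inner 1 x = 0 ∧ inner (etilde n) x = 0 := by
  simp only [IsDoublyPure, isPure_iff_inner_one_eq_zero, inner_succ, fst_etilde, snd_etilde,
    fst_one, snd_one, inner_zero_left, add_zero, zero_add, inner_comm x.1, inner_comm x.2]

namespace IsDoublyPure

variable {a : CD (n + 1)}

lemma isPure (ha : IsDoublyPure a) : IsPure a := ext ha.1 rfl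

lemma tilde (ha : IsDoublyPure a) : IsDoublyPure (tilde a) := ⟨ha.2.neg, ha.1⟩

lemma etilde_mul (ha : IsDoublyPure a) : etilde n * a = -CD.tilde a := by
  apply ext <;> simp [ha.1.conj_eq, ha.2.conj_eq]

lemma mul_tilde_self (ha : IsDoublyPure a) : a * CD.tilde a = -(inner a a • etilde n) := by
  apply ext
  · simp [ha.1.conj_eq]
  · simp only [snd_mul, snd_tilde, fst_tilde, conj_neg, ha.2.conj_eq, neg_neg, ha.1.mul_self,
      ha.2.mul_self, snd_neg, snd_smul, snd_etilde, inner_succ]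
    module

end IsDoublyPure

theorem assoc_tilde_eq {a x : CD (n + 1)} (ha : IsDoublyPure a) (hx : IsDoublyPure x) :
    assoc (tilde a) x a = -((2 : ℝ) • (a * (a * tilde x))) + (2 * inner (tilde a) x) • a
      - (2 * inner a x) • tilde a := by
  obtain ⟨hp, hq⟩ := ha
  obtain ⟨hu, hv⟩ := hx
  have hpqu := hp.inner_mul_add_inner_mul hq hu
  have hpqv := hp.inner_mul_add_inner_mul hq hv
  -- In components both sides are combinations of products of `a.1, a.2, x.1, x.2` in `A n`.
  -- Anticommuting `a.1, a.2` to the left puts them in a common normal form, up to the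
  -- scalars `hpqu`, `hpqv`.
  apply ext
  all_goals
    simp only [assoc, fst_mul, snd_mul, fst_tilde, snd_tilde, fst_sub, snd_sub, fst_add, snd_add,
      fst_neg, snd_neg, fst_smul, snd_smul, inner_succ, inner_neg_left, hp.conj_eq, hq.conj_eq,
      hu.conj_eq, hv.conj_eq, conj_neg, conj_add, conj_sub, conj_mul, conj_smul, conj_one, neg_neg,
      mul_add, add_mul, mul_sub, sub_mul, neg_mul, mul_neg, smul_mul_assoc, mul_smul_comm,
      mul_one, one_mul, smul_add, smul_sub, smul_neg,
      hp.mul_anticomm_of_isPure hu, hp.mul_anticomm_of_isPure hv,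
      hq.mul_anticomm_of_isPure hu, hq.mul_anticomm_of_isPure hv,
      hp.mul_mul_anticomm hu, hp.mul_mul_anticomm hv,
      hq.mul_mul_anticomm hu, hq.mul_mul_anticomm hv,
      hp.inner_mul_self_left hu, hp.inner_mul_self_left hv,
      hq.inner_mul_self_left hu, hq.inner_mul_self_left hv]
  · linear_combination (norm := module) (4 * hpqu) • (1 : CD n)
  · linear_combination (norm := module) (-2 * hpqv) • (1 : CD n)

def assocMiddleₗ (t c : CD n) : CD n →ₗ[ℝ] CD n where
  toFun x := assoc t x c
  map_add' x y := by simp only [assoc, mul_add, add_mul]; abel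
  map_smul' r x := by simp only [assoc, mul_smul_comm, smul_mul_assoc, smul_sub, RingHom.id_apply]

lemma assoc_one_middle (t c : CD n) : assoc t 1 c = 0 := by
  rw [assoc, mul_one, one_mul, sub_self]

namespace IsDoublyPure

variable {a : CD (n + 1)}

lemma assoc_tilde_tilde (ha : IsDoublyPure a) : assoc (CD.tilde a) (CD.tilde a) a = 0 := by
  rw [assoc_tilde_eq ha ha.tilde, tilde_tilde, mul_neg, ha.isPure.mul_self, neg_neg,
    mul_smul_comm, mul_one, inner_tilde_tilde, inner_self_tilde]
  module

lemma assoc_tilde_self (ha : IsDoublyPure a) : assoc (CD.tilde a) a a = 0 := by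
  rw [assoc_tilde_eq ha ha, ha.mul_tilde_self, mul_neg, mul_smul_comm, mul_etilde,
    inner_tilde_self]
  module

lemma assoc_tilde_etilde (ha : IsDoublyPure a) : assoc (CD.tilde a) (etilde n) a = 0 := by
  rw [assoc, mul_etilde, tilde_tilde, ha.etilde_mul, mul_neg, neg_mul, ha.isPure.mul_self,
    ha.tilde.isPure.mul_self, inner_tilde_tilde, sub_neg_eq_add, neg_add_cancel]

lemma H_le_ker_assocMiddleₗ (ha : IsDoublyPure a) :
    H a ≤ LinearMap.ker (assocMiddleₗ (CD.tilde a) a) := by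
  refine Submodule.span_le.2 ?_
  rintro x (rfl | rfl | rfl | rfl)
  exacts [assoc_one_middle _ _, ha.assoc_tilde_tilde, ha.assoc_tilde_self, ha.assoc_tilde_etilde]

end IsDoublyPure

end CD

theorem assoc_tilde_left_of_mem_H_or_Hperp_general (n : ℕ) (a : CD (n + 1))
    (ha : CD.IsDoublyPure a) :
    (∀ x ∈ CD.H a, CD.assoc (CD.tilde a) x a = 0) ∧
    (∀ x ∈ CD.Hperp a,
      CD.assoc (CD.tilde a) x a = -((2 : ℝ) • (a * (a * CD.tilde x)))) := by
  refine ⟨fun x hx => ha.H_le_ker_assocMiddleₗ hx, fun x hx => ?_⟩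
  have hperp (y : CD (n + 1)) (hy : y ∈ ({1, CD.tilde a, a, CD.etilde n} : Set (CD (n + 1)))) :
      CD.inner y x = 0 :=
    hx y (Submodule.subset_span hy)
  have hx_pure : CD.IsDoublyPure x := CD.isDoublyPure_iff.2 ⟨hperp 1 (by simp), hperp _ (by simp)⟩
  rw [CD.assoc_tilde_eq ha hx_pure, hperp (CD.tilde a) (by simp), hperp a (by simp)]
  module

/-- For `n ≥ 3` and doubly pure `a`: `(ã, x, a) = 0` for all `x ∈ H a`,
and `(ã, x, a) = −2·a·(a·x̃)` for all `x ∈ H a ^ ⊥`. -/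
theorem assoc_tilde_left_of_mem_H_or_Hperp (n : ℕ) (hn : 3 ≤ n + 1) (a : CD (n + 1))
    (ha : CD.IsDoublyPure a) :
    (∀ x ∈ CD.H a, CD.assoc (CD.tilde a) x a = 0) ∧
    (∀ x ∈ CD.Hperp a,
      CD.assoc (CD.tilde a) x a = -((2 : ℝ) • (a * (a * CD.tilde x)))) :=
  assoc_tilde_left_of_mem_H_or_Hperp_general n a ha
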